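/- Subterm Property: for every closed lambda term M, every Φ-term t with ⌊M⌋ →* t, and every occurrence of a constructor c_{x,N} in t, the lambda term N is a subterm of M. -/

import Mathlib

/-- Pure untyped λ-terms with named variables. -/
inductive Tm : Type
  | var : ℕ → Tm
  | lam : ℕ → Tm → Tm
  | app : Tm → Tm → Tm
deriving DecidableEq

namespace Tm

/-- Free variables. -/
def fv : Tm → Finset ℕ
  | var x => {x}
  | lam x M => fv M \ {x}
  | app M N => fv M ∪ fv N

/-- A term is closed when it has no free variables. -/
def Closed (M : Tm) : Prop := fv M = ∅

/-- Values: variables and abstractions. -/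
def IsValue : Tm → Prop
  | var _ => True
  | lam _ _ => True
  | app _ _ => False

/-- (Naive) substitution `M{N/x}`. -/
def subst : Tm → ℕ → Tm → Tm
  | var y, x, N => if y = x then N else var y
  | lam y P, x, N => if y = x then lam y P else lam y (subst P x N)
  | app P Q, x, N => app (subst P x N) (subst Q x N)

/-- Weak call-by-value reduction: β-redexes whose argument is a value,
closed under both application contexts, never under λ. -/
inductive Cbv : Tm → Tm → Prop
  | beta {x M V} : IsValue V → Cbv (app (lam x M) V) (subst M x V)
  | appL {M N L} : Cbv M N → Cbv (app M L) (app N L)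
  | appR {M N L} : Cbv M N → Cbv (app L M) (app L N)

/-- The subterm relation on λ-terms. -/
inductive Sub : Tm → Tm → Prop
  | refl (M) : Sub M M
  | lam {M N x} : Sub M N → Sub M (lam x N)
  | appL {M N L} : Sub M N → Sub M (app N L)
  | appR {M N L} : Sub M L → Sub M (app N L)

end Tm

/-- `M N₁ … Nₖ` (left-nested application). -/
def appList : Tm → List Tm → Tm := List.foldl Tm.app

/-- `λx₁.…λxₖ.M`. -/
def lams : List ℕ → Tm → Tm := fun xs M => xs.foldr Tm.lam M

/-- `stepsN R n a b`: `a` reduces to `b` in exactly `n` `R`-steps. -/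
def stepsN {α : Type*} (R : α → α → Prop) : ℕ → α → α → Prop
  | 0, a, b => a = b
  | n + 1, a, b => ∃ c, R a c ∧ stepsN R n c b

/-- `a` is an `R`-normal form. -/
def NormalForm {α : Type*} (R : α → α → Prop) (a : α) : Prop := ¬ ∃ b, R a b

/-- Terms of the constructor rewrite system Φ: variables, the binary function
symbol `app`, and a constructor `c_{x,M}` for each variable `x` and λ-term `M`. -/
inductive PTm : Type
  | pvar : ℕ → PTm
  | papp : PTm → PTm → PTm
  | con : ℕ → Tm → List PTm → PTm

namespace PTm

/-- The (sorted) list of free variables of a λ-term. -/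
def fvList (M : Tm) : List ℕ := (Tm.fv M).sort (· ≤ ·)

/-- The translation `⌊·⌋` from λ-terms to Φ-terms. -/
def toP : Tm → PTm
  | .var x => pvar x
  | .lam x M => con x M ((fvList (Tm.lam x M)).map pvar)
  | .app M N => papp (toP M) (toP N)

/-- Simultaneous (sequential, for closed arguments) λ-substitution `M{Nᵢ/xᵢ}`. -/
def substList (M : Tm) (xs : List ℕ) (Ns : List Tm) : Tm :=
  (xs.zip Ns).foldl (fun acc p => Tm.subst acc p.1 p.2) M

/-- The readback `⌈·⌉` from Φ-terms to λ-terms. -/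
def toL : PTm → Tm
  | pvar x => .var x
  | papp u v => .app (toL u) (toL v)
  | con x M ts =>
      substList (Tm.lam x M) (fvList (Tm.lam x M)) (ts.attach.map fun t => toL t.1)
termination_by t => sizeOf t
decreasing_by all_goals first
  | (simp_wf; have := List.sizeOf_lt_of_mem t.2; omega)
  | (simp_wf; omega)
  | simp_wf

/-- First-order substitution on Φ-terms. -/
def psubst : PTm → ℕ → PTm → PTm
  | pvar y, x, N => if y = x then N else pvar y
  | papp u v, x, N => papp (psubst u x N) (psubst v x N)
  | con y M ts, x, N => con y M (ts.attach.map fun t => psubst t.1 x N)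
termination_by t _ _ => sizeOf t
decreasing_by all_goals first
  | (simp_wf; have := List.sizeOf_lt_of_mem t.2; omega)
  | (simp_wf; omega)
  | simp_wf

/-- Simultaneous (sequential, for ground arguments) substitution on Φ-terms. -/
def psubstList (t : PTm) (xs : List ℕ) (us : List PTm) : PTm :=
  (xs.zip us).foldl (fun acc p => psubst acc p.1 p.2) t

/-- Constructor terms of Φ: ground terms built from constructors only. -/
inductive IsConT : PTm → Prop
  | con {x M ts} : (∀ t ∈ ts, IsConT t) → IsConT (con x M ts)

/-- Well-formed Φ-terms: every constructor `c_{x,M}` gets exactly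
`|FV(λx.M)|` arguments. -/
inductive WF : PTm → Prop
  | pvar (x) : WF (pvar x)
  | papp {u v} : WF u → WF v → WF (papp u v)
  | con {x M ts} : ts.length = (fvList (Tm.lam x M)).length →
      (∀ t ∈ ts, WF t) → WF (con x M ts)

/-- Canonical closed Φ-terms: constructor terms, or `app` of canonical terms. -/
inductive Canonical : PTm → Prop
  | ofCon {t} : IsConT t → Canonical t
  | papp {u v} : Canonical u → Canonical v → Canonical (papp u v)

/-- Call-by-value rewriting in Φ: the rules are
`app(c_{x,M}(x₁,…,xₙ), x) → ⌊M⌋` (with `FV(λx.M) = x₁,…,xₙ`), matched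
variables are instantiated by constructor terms, and rewriting is closed
under arbitrary contexts. -/
inductive Step : PTm → PTm → Prop
  | beta {x : ℕ} {M : Tm} {ts : List PTm} {v : PTm} :
      (∀ t ∈ ts, IsConT t) → IsConT v →
      ts.length = (fvList (Tm.lam x M)).length →
      Step (papp (con x M ts) v)
        (psubstList (toP M) (fvList (Tm.lam x M) ++ [x]) (ts ++ [v]))
  | appL {u u' v} : Step u u' → Step (papp u v) (papp u' v)
  | appR {u v v'} : Step v v' → Step (papp u v) (papp u v')
  | conArg {x M t t' l r} : Step t t' →
      Step (con x M (l ++ t :: r)) (con x M (l ++ t' :: r))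

/-- Variables occurring in a Φ-term. -/
def pvarsOf : PTm → Finset ℕ
  | pvar x => {x}
  | papp u v => pvarsOf u ∪ pvarsOf v
  | con _ _ ts => ts.attach.foldr (fun t s => pvarsOf t.1 ∪ s) ∅
termination_by t => sizeOf t
decreasing_by all_goals first
  | (simp_wf; have := List.sizeOf_lt_of_mem t.2; omega)
  | (simp_wf; omega)
  | simp_wf

/-- The subterm relation on Φ-terms. -/
inductive PSub : PTm → PTm → Prop
  | refl (t) : PSub t t
  | appL {t u v} : PSub t u → PSub t (papp u v)
  | appR {t u v} : PSub t v → PSub t (papp u v)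
  | conArg {t u x M ts} : u ∈ ts → PSub t u → PSub t (con x M ts)

end PTm

/-!
Φ-reduction never invents a constructor body: substitution only copies constructors that are
already present, and a β-step on `app(c_{x,M}(…), v)` instantiates `⌊M⌋`, whose constructor
bodies are subterms of `M`. Hence the constructor bodies of any reduct of `⌊M⌋` are subterms of
constructor bodies of `⌊M⌋`, which are subterms of `M`.
-/

theorem Tm.Sub.trans {A B C : Tm} (hAB : Tm.Sub A B) (hBC : Tm.Sub B C) : Tm.Sub A C := by
  induction hBC with
  | refl => exact hAB
  | lam _ ih => exact .lam ih
  | appL _ ih => exact .appL ih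
  | appR _ ih => exact .appR ih

namespace PTm

def HasCon (N : Tm) (t : PTm) : Prop := ∃ x ts, PSub (con x N ts) t

@[simp]
theorem hasCon_pvar {N : Tm} {z : ℕ} : ¬ HasCon N (pvar z) := by
  rintro ⟨x, ts, h⟩
  cases h

@[simp]
theorem hasCon_papp {N : Tm} {u v : PTm} : HasCon N (papp u v) ↔ HasCon N u ∨ HasCon N v := by
  constructor
  · rintro ⟨x, ts, h⟩
    cases h with
    | appL h => exact .inl ⟨x, ts, h⟩
    | appR h => exact .inr ⟨x, ts, h⟩
  · rintro (⟨x, ts, h⟩ | ⟨x, ts, h⟩)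
    exacts [⟨x, ts, .appL h⟩, ⟨x, ts, .appR h⟩]

@[simp]
theorem hasCon_con {N M : Tm} {y : ℕ} {ss : List PTm} :
    HasCon N (con y M ss) ↔ N = M ∨ ∃ u ∈ ss, HasCon N u := by
  constructor
  · rintro ⟨x, ts, h⟩
    cases h with
    | refl => exact .inl rfl
    | conArg hu h => exact .inr ⟨_, hu, x, ts, h⟩
  · rintro (rfl | ⟨u, hu, x, ts, h⟩)
    exacts [⟨y, ss, .refl _⟩, ⟨x, ts, .conArg hu h⟩]

theorem psubst_con (y x : ℕ) (M : Tm) (ts : List PTm) (s : PTm) :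
    psubst (con y M ts) x s = con y M (ts.map fun t => psubst t x s) := by
  simp [psubst]

theorem HasCon.of_psubst {N : Tm} {y : ℕ} {s : PTm} :
    ∀ u : PTm, HasCon N (psubst u y s) → HasCon N u ∨ HasCon N s
  | pvar z, h => by
    unfold psubst at h
    split at h
    · exact .inr h
    · exact absurd h hasCon_pvar
  | papp u v, h => by
    rw [psubst, hasCon_papp] at h
    rcases h with h | h
    · exact (HasCon.of_psubst u h).imp_left (hasCon_papp.2 <| .inl ·)
    · exact (HasCon.of_psubst v h).imp_left (hasCon_papp.2 <| .inr ·)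
  | con z M ts, h => by
    rw [psubst_con, hasCon_con] at h
    rcases h with rfl | ⟨_, hmem, h⟩
    · exact .inl (hasCon_con.2 (.inl rfl))
    · obtain ⟨u, hu, rfl⟩ := List.mem_map.1 hmem
      exact (HasCon.of_psubst u h).imp_left (hasCon_con.2 <| .inr ⟨u, hu, ·⟩)
termination_by u => sizeOf u
decreasing_by
  all_goals simp_wf
  all_goals first | omega | (have := List.sizeOf_lt_of_mem hu; omega)

theorem HasCon.of_psubstList {N : Tm} :
    ∀ {t : PTm} {xs : List ℕ} {us : List PTm},
      HasCon N (psubstList t xs us) → HasCon N t ∨ ∃ u ∈ us, HasCon N u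
  | t, [], _, h | t, _ :: _, [], h => .inl h
  | t, x :: xs, u :: us, h => by
    rcases HasCon.of_psubstList (t := psubst t x u) h with h | ⟨u', hu', h⟩
    · exact (HasCon.of_psubst t h).imp_right fun h => ⟨u, List.mem_cons_self, h⟩
    · exact .inr ⟨u', List.mem_cons_of_mem _ hu', h⟩

theorem HasCon.sub_of_toP {N : Tm} : ∀ {P : Tm}, HasCon N (toP P) → Tm.Sub N P
  | .var _, h => absurd h hasCon_pvar
  | .lam _ _, h => by
    rw [toP, hasCon_con] at h
    rcases h with rfl | ⟨_, hu, h⟩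
    · exact .lam (.refl _)
    · obtain ⟨z, -, rfl⟩ := List.mem_map.1 hu
      exact absurd h hasCon_pvar
  | .app _ _, h => by
    rw [toP, hasCon_papp] at h
    exact h.elim (.appL <| HasCon.sub_of_toP ·) (.appR <| HasCon.sub_of_toP ·)

def BodiesBelow (t' t : PTm) : Prop := ∀ N, HasCon N t' → ∃ P, HasCon P t ∧ Tm.Sub N P

theorem BodiesBelow.refl (t : PTm) : BodiesBelow t t :=
  fun N h => ⟨N, h, .refl N⟩

theorem BodiesBelow.trans {t'' t' t : PTm} (h₁ : BodiesBelow t'' t') (h₂ : BodiesBelow t' t) :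
    BodiesBelow t'' t := fun N hN =>
  let ⟨P, hP, hNP⟩ := h₁ N hN
  let ⟨Q, hQ, hPQ⟩ := h₂ P hP
  ⟨Q, hQ, hNP.trans hPQ⟩

theorem BodiesBelow.papp {u' u v' v : PTm} (hu : BodiesBelow u' u) (hv : BodiesBelow v' v) :
    BodiesBelow (papp u' v') (papp u v) := by
  intro N hN
  rcases hasCon_papp.1 hN with hN | hN
  · obtain ⟨P, hP, hNP⟩ := hu N hN
    exact ⟨P, hasCon_papp.2 (.inl hP), hNP⟩
  · obtain ⟨P, hP, hNP⟩ := hv N hN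
    exact ⟨P, hasCon_papp.2 (.inr hP), hNP⟩

theorem BodiesBelow.con_append_cons {t' t : PTm} (x : ℕ) (M : Tm) (l r : List PTm)
    (h : BodiesBelow t' t) : BodiesBelow (con x M (l ++ t' :: r)) (con x M (l ++ t :: r)) := by
  intro N hN
  rcases hasCon_con.1 hN with rfl | ⟨u, hu, huN⟩
  · exact ⟨N, hasCon_con.2 (.inl rfl), .refl N⟩
  rw [List.mem_append, List.mem_cons] at hu
  rcases hu with hu | rfl | hu
  · exact ⟨N, hasCon_con.2 (.inr ⟨u, by simp [hu], huN⟩), .refl N⟩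
  · obtain ⟨P, hP, hNP⟩ := h N huN
    exact ⟨P, hasCon_con.2 (.inr ⟨t, by simp, hP⟩), hNP⟩
  · exact ⟨N, hasCon_con.2 (.inr ⟨u, by simp [hu], huN⟩), .refl N⟩

theorem Step.bodiesBelow {t t' : PTm} (h : Step t t') : BodiesBelow t' t := by
  induction h with
  | @beta x M ts v =>
    intro N hN
    rcases HasCon.of_psubstList hN with hN | ⟨u, hu, hN⟩
    · exact ⟨M, hasCon_papp.2 (.inl (hasCon_con.2 (.inl rfl))), HasCon.sub_of_toP hN⟩
    · refine ⟨N, ?_, .refl N⟩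
      rcases List.mem_append.1 hu with hu | hu
      · exact hasCon_papp.2 (.inl (hasCon_con.2 (.inr ⟨u, hu, hN⟩)))
      · exact hasCon_papp.2 (.inr (List.mem_singleton.1 hu ▸ hN))
  | appL _ ih => exact ih.papp (.refl _)
  | appR _ ih => exact (BodiesBelow.refl _).papp ih
  | conArg _ ih => exact ih.con_append_cons _ _ _ _

theorem bodiesBelow_of_reflTransGen {t t' : PTm} (h : Relation.ReflTransGen Step t t') :
    BodiesBelow t' t := by
  induction h with
  | refl => exact .refl t
  | tail _ hstep ih => exact hstep.bodiesBelow.trans ih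

end PTm

theorem subterm_property_general (M : Tm) (t : PTm)
    (h : Relation.ReflTransGen PTm.Step (PTm.toP M) t)
    (x : ℕ) (N : Tm) (ts : List PTm) (hocc : PTm.PSub (PTm.con x N ts) t) :
    Tm.Sub N M := by
  obtain ⟨P, hP, hNP⟩ := PTm.bodiesBelow_of_reflTransGen h N ⟨x, ts, hocc⟩
  exact hNP.trans (PTm.HasCon.sub_of_toP hP)

/-- Subterm Property: for every closed λ-term `M`, every
Φ-term `t` with `⌊M⌋ →* t`, and every occurrence of a constructor `c_{x,N}`
in `t`, the λ-term `N` is a subterm of `M`. -/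
theorem subterm_property (M : Tm) (hM : Tm.Closed M) (t : PTm)
    (h : Relation.ReflTransGen PTm.Step (PTm.toP M) t)
    (x : ℕ) (N : Tm) (ts : List PTm) (hocc : PTm.PSub (PTm.con x N ts) t) :
    Tm.Sub N M :=
  subterm_property_general M t h x N ts hocc
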